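/- arXiv:1905.09101 — 2 statements merged into one kernel-verified Lean document; each statement's English description precedes it below -/
import Mathlib

section
/- For all integers k ≥ 2 and n ≥ 4k+2, the graph G(n,k) contains no cycle whose length ℓ satisfies 2k ≤ ℓ ≤ 4k+1. -/
/-- Vertices of the graph `H m`: `Sum.inl i` is `xᵢ`, `Sum.inr i` is `yᵢ`. -/
abbrev HV (m : ℕ) := Fin (2*m+1) ⊕ Fin (2*m+1)

/-- Generating relation for the edges of `H m`: the cycle `x₀ x₁ … x_{2m} x₀`, the cycle
`y₀ y₁ … y_{2m} y₀`, the chords `xᵢ x_{2m-i}` and `yᵢ y_{2m-i}` for `1 ≤ i ≤ m-1`,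
and the edge `x_m y_m`. -/
def HRel (m : ℕ) : HV m → HV m → Prop
  | Sum.inl i, Sum.inl j =>
      (j : ℕ) = ((i : ℕ) + 1) % (2*m+1) ∨
        (1 ≤ (i : ℕ) ∧ (i : ℕ) ≤ m - 1 ∧ (j : ℕ) = 2*m - (i : ℕ))
  | Sum.inr i, Sum.inr j =>
      (j : ℕ) = ((i : ℕ) + 1) % (2*m+1) ∨
        (1 ≤ (i : ℕ) ∧ (i : ℕ) ≤ m - 1 ∧ (j : ℕ) = 2*m - (i : ℕ))
  | Sum.inl i, Sum.inr j => (i : ℕ) = m ∧ (j : ℕ) = m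
  | _, _ => False

/-- Vertices of `G(n,k) = Dₙ(M, H_{k-1})`.  Since `M` is a perfect matching of `Dₙ`, every
vertex of `Dₙ` is replaced, and the resulting graph consists of `2n` copies of `H_{k-1}`,
one for each edge of `M`.  The copy indexed by `c ∈ Fin (2n)` replaces the matching edge
incident with the vertex `w_c` of the cycle `C₃` (0-based: `v_i w_{2i}` resp.
`u_i w_{2i+1}`); its `x`-side replaces the endpoint `vᵢ` (resp. `uᵢ`) and its `y`-side
replaces the endpoint `w_c`. -/
abbrev GV (n k : ℕ) := Fin (2*n) × HV (k-1)

/-- Generating relation for the edges of `G(n,k)`: all edges inside each copy of `H_{k-1}`,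
together with, for each non-matching edge of `Dₙ`, one edge joining the corresponding
attachment vertices (`x₀`/`x_{2(k-1)}` on the `x`-sides for the edges of the cycles `C₁`,
`C₂`, and `y₀`/`y_{2(k-1)}` on the `y`-sides for the edges of the cycle `C₃`). -/
def GRel (n k : ℕ) : GV n k → GV n k → Prop := fun p q =>
  (p.1 = q.1 ∧ HRel (k-1) p.2 q.2) ∨
  ((q.1 : ℕ) = ((p.1 : ℕ) + 2) % (2*n) ∧
    p.2 = Sum.inl ⟨2*(k-1), by omega⟩ ∧ q.2 = Sum.inl ⟨0, by omega⟩) ∨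
  ((q.1 : ℕ) = ((p.1 : ℕ) + 1) % (2*n) ∧
    p.2 = Sum.inr ⟨2*(k-1), by omega⟩ ∧ q.2 = Sum.inr ⟨0, by omega⟩)

/-- The graph `G(n,k) = Dₙ(M, H_{k-1})`. -/
def Gnk (n k : ℕ) : SimpleGraph (GV n k) := SimpleGraph.fromRel (GRel n k)

namespace GP

variable {n k : ℕ}

/-- side: false = x, true = y -/
def sd (p : GV n k) : Bool := p.2.isRight

/-- position within the gadget -/
def ps (p : GV n k) : ℕ := (Sum.elim Fin.val Fin.val p.2)

/-- depth = distance to nearer attachment -/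
def dp (p : GV n k) : ℕ := min (ps p) (2*(k-1) - ps p)

lemma ps_lt (p : GV n k) : ps p < 2*(k-1)+1 := by
  rcases p with ⟨c, i | i⟩ <;> exact i.isLt

lemma gv_ext {p q : GV n k} (h1 : p.1 = q.1) (h2 : sd p = sd q) (h3 : ps p = ps q) : p = q := by
  rcases p with ⟨c, i | i⟩ <;> rcases q with ⟨c', j | j⟩ <;> simp_all [sd, ps] <;> exact Fin.ext h3

def Internal (p q : GV n k) : Prop :=
  p.1 = q.1 ∧ sd p = sd q ∧ dp q ≤ dp p + 1 ∧ dp p ≤ dp q + 1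

def Bridge (p q : GV n k) : Prop :=
  p.1 = q.1 ∧ sd p ≠ sd q ∧ ps p = k-1 ∧ ps q = k-1

def delta (s : Bool) : ℕ := if s then 1 else 2

def Conn (n : ℕ) {k : ℕ} (p q : GV n k) : Prop := sd p = sd q ∧
  ((ps p = 2*(k-1) ∧ ps q = 0 ∧ (q.1 : ℕ) = ((p.1 : ℕ) + delta (sd p)) % (2*n)) ∨
   (ps p = 0 ∧ ps q = 2*(k-1) ∧ (p.1 : ℕ) = ((q.1 : ℕ) + delta (sd p)) % (2*n)))

lemma internal_symm {p q : GV n k} (h : Internal p q) : Internal q p := by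
  obtain ⟨h1, h2, h3, h4⟩ := h; exact ⟨h1.symm, h2.symm, h4, h3⟩

lemma bridge_symm {p q : GV n k} (h : Bridge p q) : Bridge q p := by
  obtain ⟨h1, h2, h3, h4⟩ := h; exact ⟨h1.symm, Ne.symm h2, h4, h3⟩

lemma conn_symm {p q : GV n k} (h : Conn n p q) : Conn n q p := by
  obtain ⟨h1, h2 | h2⟩ := h
  · exact ⟨h1.symm, Or.inr ⟨h2.2.1, h2.1, h1 ▸ h2.2.2⟩⟩
  · exact ⟨h1.symm, Or.inl ⟨h2.2.1, h2.1, h1 ▸ h2.2.2⟩⟩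

lemma grel_class (hk : 2 ≤ k) {p q : GV n k} (h : GRel n k p q) :
    Internal p q ∨ Bridge p q ∨ Conn n p q := by
  rcases h with ⟨h1, h2⟩ | ⟨h1, h2, h3⟩ | ⟨h1, h2, h3⟩
  · rcases p with ⟨c, i | i⟩ <;> rcases q with ⟨c', j | j⟩
    · rcases h2 with h2 | ⟨ha, hb, hc⟩
      · left
        refine ⟨h1, rfl, ?_, ?_⟩ <;>
        · have hi := i.isLt; have hj := j.isLt
          simp only [dp, ps, Sum.elim_inl]
          rcases Nat.lt_or_ge ((i:ℕ)+1) (2*(k-1)+1) with hlt | hge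
          · rw [Nat.mod_eq_of_lt hlt] at h2; omega
          · have : ((i:ℕ)+1) = 2*(k-1)+1 := by omega
            rw [this, Nat.mod_self] at h2; omega
      · left
        refine ⟨h1, rfl, ?_, ?_⟩ <;>
        · have hi := i.isLt; have hj := j.isLt
          simp only [dp, ps, Sum.elim_inl]; omega
    · obtain ⟨ha, hb⟩ := h2
      right; left; exact ⟨h1, by simp [sd], by simpa [ps] using ha, by simpa [ps] using hb⟩
    · exact h2.elim
    · rcases h2 with h2 | ⟨ha, hb, hc⟩
      · left
        refine ⟨h1, rfl, ?_, ?_⟩ <;>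
        · have hi := i.isLt; have hj := j.isLt
          simp only [dp, ps, Sum.elim_inr]
          rcases Nat.lt_or_ge ((i:ℕ)+1) (2*(k-1)+1) with hlt | hge
          · rw [Nat.mod_eq_of_lt hlt] at h2; omega
          · have : ((i:ℕ)+1) = 2*(k-1)+1 := by omega
            rw [this, Nat.mod_self] at h2; omega
      · left
        refine ⟨h1, rfl, ?_, ?_⟩ <;>
        · have hi := i.isLt; have hj := j.isLt
          simp only [dp, ps, Sum.elim_inr]; omega
  · right; right
    refine ⟨by simp [sd, h2, h3], Or.inl ⟨?_, ?_, ?_⟩⟩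
    · simp [ps, h2]
    · simp [ps, h3]
    · simpa [sd, h2, delta] using h1
  · right; right
    refine ⟨by simp [sd, h2, h3], Or.inl ⟨?_, ?_, ?_⟩⟩
    · simp [ps, h2]
    · simp [ps, h3]
    · simpa [sd, h2, delta] using h1

lemma adj_class (hk : 2 ≤ k) {p q : GV n k} (h : (Gnk n k).Adj p q) :
    Internal p q ∨ Bridge p q ∨ Conn n p q := by
  rw [Gnk, SimpleGraph.fromRel_adj] at h
  rcases h.2 with h' | h'
  · exact grel_class hk h'
  · rcases grel_class hk h' with h'' | h'' | h''
    · exact Or.inl (internal_symm h'')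
    · exact Or.inr (Or.inl (bridge_symm h''))
    · exact Or.inr (Or.inr (conn_symm h''))

lemma mod_inj {N a b c : ℕ} (ha : a < N) (hb : b < N)
    (h : (c + a) % N = (c + b) % N) : a = b := by
  have h2 : a ≡ b [MOD N] := Nat.ModEq.add_left_cancel' c h
  have h3 : a % N = b % N := h2
  rwa [Nat.mod_eq_of_lt ha, Nat.mod_eq_of_lt hb] at h3

lemma mod_add_inj {N a b d : ℕ} (ha : a < N) (hb : b < N)
    (h : (a + d) % N = (b + d) % N) : a = b := by
  have h2 : a ≡ b [MOD N] := Nat.ModEq.add_right_cancel' d h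
  have h3 : a % N = b % N := h2
  rwa [Nat.mod_eq_of_lt ha, Nat.mod_eq_of_lt hb] at h3

lemma zmod_cast_eq_zero {ℓ t : ℕ} (h3 : 3 ≤ ℓ) (h : (t : ZMod ℓ) = 0) : ℓ ∣ t := by
  haveI : NeZero ℓ := ⟨by omega⟩
  exact (ZMod.natCast_eq_zero_iff ..).mp h

lemma two_ne_zero' {ℓ : ℕ} (h3 : 3 ≤ ℓ) : (2 : ZMod ℓ) ≠ 0 := by
  intro h
  have h2 : ((2 : ℕ) : ZMod ℓ) = 0 := by push_cast; exact h
  have hd : ℓ ∣ 2 := zmod_cast_eq_zero h3 h2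
  have := Nat.le_of_dvd (by norm_num) hd
  omega

lemma one_ne_zero' {ℓ : ℕ} (h3 : 3 ≤ ℓ) : (1 : ZMod ℓ) ≠ 0 := by
  intro h
  have h2 : ((1 : ℕ) : ZMod ℓ) = 0 := by push_cast; exact h
  have hd : ℓ ∣ 1 := zmod_cast_eq_zero h3 h2
  have := Nat.le_of_dvd (by norm_num) hd
  omega

lemma idx_two {ℓ : ℕ} (h3 : 3 ≤ ℓ) {i j : ZMod ℓ} (h1 : i = j + 1) (h2 : j = i + 1) : False := by
  rw [h2] at h1
  have h' : (2 : ZMod ℓ) = 0 := by linear_combination - h1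
  exact two_ne_zero' h3 h'

lemma cast_pred {ℓ : ℕ} (h3 : 3 ≤ ℓ) : ((ℓ - 1 : ℕ) : ZMod ℓ) = -1 := by
  have : ((ℓ - 1 : ℕ) : ZMod ℓ) + 1 = 0 := by
    have : ((ℓ - 1 : ℕ) : ZMod ℓ) + ((1:ℕ) : ZMod ℓ) = ((ℓ : ℕ) : ZMod ℓ) := by
      rw [← Nat.cast_add]; congr 1; omega
    simpa [ZMod.natCast_self] using this
  linear_combination this

end GP

section P3
open GP
variable {n k : ℕ}

lemma GP.conn_ne (hN : 4 < 2*n) {p q : GV n k} (h : Conn n p q) : p.1 ≠ q.1 := by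
  have hδ1 : 1 ≤ delta (sd p) := by unfold delta; split <;> norm_num
  have hδ2 : delta (sd p) ≤ 2 := by unfold delta; split <;> norm_num
  intro hc
  rcases h.2 with ⟨_, _, h3⟩ | ⟨_, _, h3⟩
  · rw [← hc] at h3
    have h0 : ((p.1:ℕ) + 0) % (2*n) = (p.1:ℕ) := by
      rw [Nat.add_zero]; exact Nat.mod_eq_of_lt p.1.isLt
    have := mod_inj (N := 2*n) (by omega) (by omega)
      (by rw [h0]; exact h3 : ((p.1:ℕ) + 0) % (2*n) = ((p.1:ℕ) + delta (sd p)) % (2*n))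
    omega
  · rw [← hc] at h3
    have h0 : ((p.1:ℕ) + 0) % (2*n) = (p.1:ℕ) := by
      rw [Nat.add_zero]; exact Nat.mod_eq_of_lt p.1.isLt
    have := mod_inj (N := 2*n) (by omega) (by omega)
      (by rw [h0]; exact h3 : ((p.1:ℕ) + 0) % (2*n) = ((p.1:ℕ) + delta (sd p)) % (2*n))
    omega

lemma GP.adj_conn (hk : 2 ≤ k) (hN : 4 < 2*n) {p q : GV n k}
    (h : (Gnk n k).Adj p q) (hne : p.1 ≠ q.1) : Conn n p q := by
  rcases adj_class hk h with h' | h' | h'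
  · exact absurd h'.1 hne
  · exact absurd h'.1 hne
  · exact h'

lemma GP.adj_same_copy (hk : 2 ≤ k) (hN : 4 < 2*n) {p q : GV n k}
    (h : (Gnk n k).Adj p q) (he : p.1 = q.1) : Internal p q ∨ Bridge p q := by
  rcases adj_class hk h with h' | h' | h'
  · exact Or.inl h'
  · exact Or.inr h'
  · exact absurd he (conn_ne hN h')

lemma GP.adj_internal (hk : 2 ≤ k) (hN : 4 < 2*n) {p q : GV n k}
    (h : (Gnk n k).Adj p q) (he : p.1 = q.1) (hs : sd p = sd q) : Internal p q := by
  rcases adj_same_copy hk hN h he with h' | h'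
  · exact h'
  · exact absurd hs h'.2.1

lemma GP.conn_unique (hk : 2 ≤ k) (hN : 4 < 2*n) {p q q' : GV n k}
    (h1 : (Gnk n k).Adj p q) (h2 : (Gnk n k).Adj p q')
    (hq : p.1 ≠ q.1) (hq' : p.1 ≠ q'.1) : q = q' := by
  have hc1 := adj_conn hk hN h1 hq
  have hc2 := adj_conn hk hN h2 hq'
  have h2m : 2*(k-1) ≠ 0 := by omega
  rcases hc1.2 with ⟨ha1, hb1, hd1⟩ | ⟨ha1, hb1, hd1⟩ <;>
    rcases hc2.2 with ⟨ha2, hb2, hd2⟩ | ⟨ha2, hb2, hd2⟩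
  · refine gv_ext (Fin.ext ?_) (hc2.1 ▸ hc1.1.symm) (by omega)
    rw [hd1, hd2]
  · omega
  · omega
  · refine gv_ext (Fin.ext ?_) (hc2.1 ▸ hc1.1.symm) (by omega)
    exact mod_add_inj q.1.isLt q'.1.isLt (hd1.symm.trans hd2)

end P3

section P4
open GP
variable {n k ℓ : ℕ}

lemma GP.reach (hl3 : 3 ≤ ℓ) (P : ZMod ℓ → Prop)
    (hstep : ∀ i, P i → P (i + 1)) {i₀ : ZMod ℓ} (h : P i₀) (j : ZMod ℓ) : P j := by
  haveI : NeZero ℓ := ⟨by omega⟩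
  have key : ∀ t : ℕ, P (i₀ + (t : ZMod ℓ)) := by
    intro t
    induction t with
    | zero => simpa using h
    | succ t ih =>
        have hc : ((t + 1 : ℕ) : ZMod ℓ) = (t : ZMod ℓ) + 1 := by push_cast; ring
        rw [hc, ← add_assoc]
        exact hstep _ ih
  have hv : i₀ + (((j - i₀).val : ℕ) : ZMod ℓ) = j := by
    rw [ZMod.natCast_rightInverse (j - i₀)]; ring
  exact hv ▸ key _

lemma GP.ivt (g : ℕ → ℕ) (T A : ℕ) (h0 : g 0 = A) (hT : g T = 0)
    (hstep : ∀ s, s < T → g (s+1) ≤ g s + 1 ∧ g s ≤ g (s+1) + 1) :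
    ∀ d ≤ A, ∃ s ≤ T, g s = d := by
  intro d hd
  classical
  have hex : ∃ s, g s ≤ d := ⟨T, by omega⟩
  set s₀ := Nat.find hex with hs₀def
  have hs₀ : g s₀ ≤ d := Nat.find_spec hex
  have hs₀T : s₀ ≤ T := Nat.find_le (by omega)
  rcases Nat.eq_zero_or_pos s₀ with h0' | hpos
  · refine ⟨0, Nat.zero_le _, ?_⟩
    have h2 := hs₀; rw [h0'] at h2; omega
  · have hm : ¬ g (s₀ - 1) ≤ d := Nat.find_min hex (by omega)
    have hst := hstep (s₀ - 1) (by omega)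
    have : s₀ - 1 + 1 = s₀ := by omega
    rw [this] at hst
    exact ⟨s₀, hs₀T, by omega⟩

end P4

section P5
open GP
variable {n k ℓ : ℕ}

lemma GP.bool_eq_of_ne {a b c : Bool} (h1 : a ≠ c) (h2 : b ≠ c) : a = b := by
  cases a <;> cases b <;> cases c <;> simp_all

lemma GP.dp_mid {p : GV n k} (h : ps p = k-1) : dp p = k-1 := by
  unfold dp; omega

lemma GP.dp_end {p : GV n k} (h : ps p = 0 ∨ ps p = 2*(k-1)) : dp p = 0 := by
  unfold dp; omega

lemma GP.conn_dp_left {p q : GV n k} (h : Conn n p q) : dp p = 0 := by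
  rcases h.2 with ⟨h1, _, _⟩ | ⟨h1, _, _⟩ <;> exact dp_end (by omega)

lemma GP.escape (hk : 2 ≤ k) (hn : 4*k+2 ≤ n) (hl3 : 3 ≤ ℓ)
    (f : ZMod ℓ → GV n k) (hinj : Function.Injective f)
    (hadj : ∀ i, (Gnk n k).Adj (f i) (f (i+1)))
    (i : ZMod ℓ) (hbr : Bridge (f i) (f (i+1))) (d : ℕ) (hd : d ≤ k-1) :
    ∃ j, (f j).1 = (f i).1 ∧ sd (f j) = sd (f (i+1)) ∧ dp (f j) = d := by
  classical
  haveI : NeZero ℓ := ⟨by omega⟩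
  have hN : 4 < 2*n := by omega
  set c := (f i).1 with hc
  set s₁ := sd (f (i+1)) with hs₁
  -- the vertex trajectory starting after the bridge
  set InCS : ℕ → Prop := fun t => (f (i + 1 + (t:ZMod ℓ))).1 = c ∧ sd (f (i + 1 + (t:ZMod ℓ))) = s₁
    with hInCS
  have hstep : ∀ u : ℕ, (Gnk n k).Adj (f (i + 1 + (u:ZMod ℓ))) (f (i + 1 + ((u+1:ℕ):ZMod ℓ))) := by
    intro u
    have : (i + 1 + ((u+1:ℕ):ZMod ℓ)) = (i + 1 + (u:ZMod ℓ)) + 1 := by push_cast; ring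
    rw [this]; exact hadj _
  have hW : ¬ InCS (ℓ - 1) := by
    have hidx : i + 1 + (((ℓ - 1 : ℕ)) : ZMod ℓ) = i := by
      rw [cast_pred hl3]; ring
    simp only [hInCS, hidx]
    intro hcon
    exact hbr.2.1 hcon.2
  obtain ⟨t₀, ht₀⟩ : ∃ t₀, Nat.find (⟨ℓ-1, hW⟩ : ∃ t, ¬ InCS t) = t₀ := ⟨_, rfl⟩
  have hOut : ¬ InCS t₀ := ht₀ ▸ Nat.find_spec (⟨ℓ-1, hW⟩ : ∃ t, ¬ InCS t)
  have hIn : ∀ s, s < t₀ → InCS s := by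
    intro s hs
    have := Nat.find_min (⟨ℓ-1, hW⟩ : ∃ t, ¬ InCS t) (ht₀ ▸ hs)
    exact not_not.mp this
  have ht₀le : t₀ ≤ ℓ - 1 := ht₀ ▸ Nat.find_le hW
  have hIn0 : InCS 0 := by
    constructor
    · simp only [Nat.cast_zero, add_zero]
      exact hbr.1.symm
    · simp only [Nat.cast_zero, add_zero]
      exact hs₁.symm
  have ht₀pos : 0 < t₀ := by
    rcases Nat.eq_zero_or_pos t₀ with h | h
    · exact absurd (h ▸ hIn0) hOut
    · exact h
  -- the exit step
  set a : ZMod ℓ := i + 1 + ((t₀ - 1 : ℕ) : ZMod ℓ) with ha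
  set b : ZMod ℓ := i + 1 + ((t₀ : ℕ) : ZMod ℓ) with hb
  have hA : InCS (t₀ - 1) := hIn _ (by omega)
  have hadjab : (Gnk n k).Adj (f a) (f b) := by
    have h1 := hstep (t₀ - 1)
    have h2 : t₀ - 1 + 1 = t₀ := by omega
    rwa [h2] at h1
  have hfa1 : (f a).1 = c := hA.1
  have hfa2 : sd (f a) = s₁ := hA.2
  have hdpa : dp (f a) = 0 := by
    rcases adj_class hk hadjab with hcl | hcl | hcl
    · exact absurd ⟨hcl.1 ▸ hfa1, hcl.2.1 ▸ hfa2⟩ hOut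
    · -- bridge again: forces wrap-around contradiction
      exfalso
      have hfmid : f a = f (i+1) := by
        refine gv_ext ?_ ?_ ?_
        · rw [hfa1, hc, hbr.1]
        · rw [hfa2, hs₁]
        · rw [hcl.2.2.1, hbr.2.2.2]
      have hidx := hinj hfmid
      have hz : ((t₀ - 1 : ℕ) : ZMod ℓ) = 0 := by
        have : i + 1 + ((t₀ - 1 : ℕ) : ZMod ℓ) = i + 1 + 0 := by
          rw [add_zero]; exact hidx
        exact add_left_cancel this
      have hdvd : ℓ ∣ t₀ - 1 := zmod_cast_eq_zero hl3 hz
      have ht₀1 : t₀ = 1 := by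
        rcases Nat.eq_zero_of_dvd_of_lt hdvd (by omega) with h
        omega
      -- then the next vertex is f i again
      have hb' : b = i + 2 := by rw [hb, ht₀1]; push_cast; ring
      have hfb : f b = f i := by
        refine gv_ext ?_ ?_ ?_
        · rw [← hcl.1, hfa1]
        · refine bool_eq_of_ne (c := s₁) ?_ ?_
          · intro hcon
            exact hcl.2.1 (hfa2.trans hcon.symm)
          · exact hbr.2.1
        · rw [hcl.2.2.2, hbr.2.2.1]
      have := hinj hfb
      rw [hb'] at this
      have h2 : (2 : ZMod ℓ) = 0 := by
        have : i + 2 = i + 0 := by rw [add_zero]; exact this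
        exact add_left_cancel this
      exact two_ne_zero' hl3 h2
    · exact conn_dp_left hcl
  -- interior Lipschitz steps
  set g : ℕ → ℕ := fun u => dp (f (i + 1 + (u:ZMod ℓ))) with hg
  have hg0 : g 0 = k - 1 := by
    simp only [hg, Nat.cast_zero, add_zero]
    exact dp_mid hbr.2.2.2
  have hgT : g (t₀ - 1) = 0 := hdpa
  have hsteps : ∀ s, s < t₀ - 1 → g (s+1) ≤ g s + 1 ∧ g s ≤ g (s+1) + 1 := by
    intro s hs
    have h1 : InCS s := hIn _ (by omega)
    have h2 : InCS (s+1) := hIn _ (by omega)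
    have hadj' := hstep s
    have hint : Internal (f (i + 1 + (s:ZMod ℓ))) (f (i + 1 + ((s+1:ℕ):ZMod ℓ))) := by
      refine adj_internal hk hN hadj' ?_ ?_
      · rw [h1.1, h2.1]
      · rw [h1.2, h2.2]
    exact ⟨hint.2.2.1, hint.2.2.2⟩
  obtain ⟨s, hsle, hgs⟩ := ivt g (t₀ - 1) (k-1) hg0 hgT hsteps d hd
  have hsIn : InCS s := hIn _ (by omega)
  exact ⟨i + 1 + (s : ZMod ℓ), hsIn.1, hsIn.2, hgs⟩

end P5

section P6
open GP
variable {n k ℓ : ℕ}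

lemma GP.bool_eq_not {a b : Bool} (h : a ≠ b) : a = !b := by
  cases a <;> cases b <;> simp_all

lemma GP.escape' (hk : 2 ≤ k) (hn : 4*k+2 ≤ n) (hl3 : 3 ≤ ℓ)
    (f : ZMod ℓ → GV n k) (hinj : Function.Injective f)
    (hadj : ∀ i, (Gnk n k).Adj (f i) (f (i+1)))
    (i : ZMod ℓ) (hbr : Bridge (f i) (f (i+1))) (d : ℕ) (hd : d ≤ k-1) :
    ∃ j, (f j).1 = (f i).1 ∧ sd (f j) = sd (f i) ∧ dp (f j) = d := by
  set g : ZMod ℓ → GV n k := fun j => f (-j) with hgdef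
  have hginj : Function.Injective g := fun a b h => neg_injective (hinj h)
  have hgadj : ∀ j, (Gnk n k).Adj (g j) (g (j+1)) := by
    intro j
    show (Gnk n k).Adj (f (-j)) (f (-(j+1)))
    have h2 : -(j+1) = -j - 1 := by ring
    rw [h2]
    have h1 : (Gnk n k).Adj (f (-j - 1)) (f (-j - 1 + 1)) := hadj _
    have h3 : -j - 1 + 1 = -j := by ring
    rw [h3] at h1
    exact h1.symm
  have hkey1 : g (-(i+1)) = f (i+1) := by show f (-(-(i+1))) = f (i+1); rw [neg_neg]
  have hkey2 : g (-(i+1) + 1) = f i := by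
    show f (-(-(i+1) + 1)) = f i
    have : -(-(i+1) + 1) = i := by ring
    rw [this]
  have hbr' : Bridge (g (-(i+1))) (g (-(i+1)+1)) := by
    rw [hkey1, hkey2]; exact bridge_symm hbr
  obtain ⟨j', h1, h2, h3⟩ := escape hk hn hl3 g hginj hgadj (-(i+1)) hbr' d hd
  rw [hkey1] at h1
  rw [hkey2] at h2
  refine ⟨-j', ?_, ?_, ?_⟩
  · show (f (-j')).1 = (f i).1
    have : g j' = f (-j') := rfl
    rw [← this, h1, ← hbr.1]
  · show sd (f (-j')) = sd (f i)
    have : g j' = f (-j') := rfl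
    rw [← this, h2]
  · exact h3

lemma GP.escape_side (hk : 2 ≤ k) (hn : 4*k+2 ≤ n) (hl3 : 3 ≤ ℓ)
    (f : ZMod ℓ → GV n k) (hinj : Function.Injective f)
    (hadj : ∀ i, (Gnk n k).Adj (f i) (f (i+1)))
    (i : ZMod ℓ) (hbr : Bridge (f i) (f (i+1))) (s : Bool) (d : ℕ) (hd : d ≤ k-1) :
    ∃ j, (f j).1 = (f i).1 ∧ sd (f j) = s ∧ dp (f j) = d := by
  rcases Bool.eq_or_eq_not s (sd (f i)) with h | h
  · obtain ⟨j, h1, h2, h3⟩ := escape' hk hn hl3 f hinj hadj i hbr d hd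
    exact ⟨j, h1, by rw [h2, h], h3⟩
  · obtain ⟨j, h1, h2, h3⟩ := escape hk hn hl3 f hinj hadj i hbr d hd
    refine ⟨j, h1, ?_, h3⟩
    rw [h2, h]
    exact bool_eq_not (Ne.symm hbr.2.1)

lemma GP.second_change (hl3 : 3 ≤ ℓ)
    (f : ZMod ℓ → GV n k)
    (hcon : ∀ j : ZMod ℓ, j ≠ i → sd (f j) = sd (f (j + 1)))
    (hch : sd (f i) ≠ sd (f (i+1))) : False := by
  have key : ∀ t : ℕ, t ≤ ℓ - 1 → sd (f (i + 1 + (t : ZMod ℓ))) = sd (f (i+1)) := by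
    intro t
    induction t with
    | zero => intro _; simp
    | succ t ih =>
        intro ht
        have hne : i + 1 + (t : ZMod ℓ) ≠ i := by
          intro hcon2
          have h6 : i + ((t:ZMod ℓ) + 1) = i + 0 := by
            rw [add_zero]
            calc i + ((t:ZMod ℓ) + 1) = i + 1 + (t:ZMod ℓ) := by ring
              _ = i := hcon2
          have h7 := add_left_cancel h6
          have h5 : ((t + 1 : ℕ) : ZMod ℓ) = 0 := by push_cast; exact h7
          have hdvd := zmod_cast_eq_zero hl3 h5
          have := Nat.le_of_dvd (by omega) hdvd
          omega
        have h6 := hcon _ hne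
        have h7 : (i + 1 + (t:ZMod ℓ)) + 1 = i + 1 + ((t+1 : ℕ) : ZMod ℓ) := by push_cast; ring
        rw [h7] at h6
        rw [← h6]
        exact ih (by omega)
  have hfin := key (ℓ - 1) (le_refl _)
  rw [cast_pred hl3] at hfin
  have : i + 1 + (-1 : ZMod ℓ) = i := by ring
  rw [this] at hfin
  exact hch hfin

lemma GP.change_bridge (hk : 2 ≤ k)
    (f : ZMod ℓ → GV n k) (hadj : ∀ i, (Gnk n k).Adj (f i) (f (i+1)))
    (i : ZMod ℓ) (hch : sd (f i) ≠ sd (f (i+1))) : Bridge (f i) (f (i+1)) := by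
  rcases adj_class hk (hadj i) with h | h | h
  · exact absurd h.2.1 hch
  · exact h
  · exact absurd h.1 hch

lemma GP.bridges_distinct (hk : 2 ≤ k) (hl3 : 3 ≤ ℓ)
    (f : ZMod ℓ → GV n k) (hinj : Function.Injective f)
    {i j : ZMod ℓ} (hbi : Bridge (f i) (f (i+1))) (hbj : Bridge (f j) (f (j+1)))
    (hij : i ≠ j) : (f i).1 ≠ (f j).1 := by
  intro hcc
  rcases Bool.eq_or_eq_not (sd (f j)) (sd (f i)) with h | h
  · exact hij (hinj (gv_ext hcc h.symm (by rw [hbi.2.2.1, hbj.2.2.1])))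
  · have h1 : f j = f (i+1) := by
      refine gv_ext ?_ ?_ ?_
      · rw [← hcc]; exact hbi.1
      · exact h.trans (bool_eq_not (Ne.symm hbi.2.1)).symm
      · rw [hbj.2.2.1, hbi.2.2.2]
    have hj1 : j = i + 1 := hinj h1
    have h2 : f (j+1) = f i := by
      refine gv_ext ?_ ?_ ?_
      · rw [← hbj.1]; exact hcc.symm
      · exact (bool_eq_not (Ne.symm hbj.2.1)).trans (by rw [h, Bool.not_not])
      · rw [hbj.2.2.2, hbi.2.2.1]
    have hj2 : j + 1 = i := hinj h2
    exact idx_two hl3 hj2.symm hj1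

end P6

section P7
open GP
variable {n k ℓ : ℕ}

lemma GP.exit_exists (hl3 : 3 ≤ ℓ) (f : ZMod ℓ → GV n k) (c : Fin (2*n))
    {a b : ZMod ℓ} (hvis : (f a).1 = c) (hnon : (f b).1 ≠ c) :
    ∃ i, (f i).1 = c ∧ (f (i+1)).1 ≠ c := by
  by_contra h
  push_neg at h
  exact hnon (reach hl3 (fun i => (f i).1 = c) h hvis b)

lemma GP.entry_exists (hl3 : 3 ≤ ℓ) (f : ZMod ℓ → GV n k) (c : Fin (2*n))
    {a b : ZMod ℓ} (hvis : (f a).1 = c) (hnon : (f b).1 ≠ c) :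
    ∃ i, (f i).1 ≠ c ∧ (f (i+1)).1 = c := by
  by_contra h
  push_neg at h
  exact (reach hl3 (fun i => (f i).1 ≠ c) h hnon a) hvis

lemma GP.no_bridge_case (hk : 2 ≤ k) (hn : 4*k+2 ≤ n) (hl3 : 3 ≤ ℓ)
    (hlo : 2*k ≤ ℓ) (hhi : ℓ ≤ 4*k+1)
    (f : ZMod ℓ → GV n k) (hinj : Function.Injective f)
    (hadj : ∀ i, (Gnk n k).Adj (f i) (f (i+1)))
    (hnb : ∀ i : ZMod ℓ, sd (f i) = sd (f (i+1))) : False := by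
  classical
  haveI : NeZero ℓ := ⟨by omega⟩
  have hN : 4 < 2*n := by omega
  have hside : ∀ j, sd (f j) = sd (f 0) := by
    intro j
    refine reach hl3 (fun j => sd (f j) = sd (f 0)) ?_ rfl j
    intro i h
    rw [← hnb i]; exact h
  by_cases hC : ∀ j : ZMod ℓ, (f j).1 = (f 0).1
  · have hcard : ℓ ≤ 2*(k-1)+1 := by
      have hI : Function.Injective
          (fun j : ZMod ℓ => (⟨ps (f j), ps_lt _⟩ : Fin (2*(k-1)+1))) := by
        intro a b h
        apply hinj
        refine gv_ext ((hC a).trans (hC b).symm) ((hside a).trans (hside b).symm) ?_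
        exact congrArg Fin.val h
      have := Fintype.card_le_of_injective _ hI
      simpa [ZMod.card] using this
    omega
  · push_neg at hC
    obtain ⟨b₀, hb₀⟩ := hC
    set δ := delta (sd (f 0)) with hδ
    have hδ12 : 1 ≤ δ ∧ δ ≤ 2 := by
      rw [hδ]; unfold delta; split <;> omega
    have closure : ∀ c : Fin (2*n), (∃ a, (f a).1 = c) →
        ∃ a', ((f a').1 : ℕ) = ((c:ℕ) + δ) % (2*n) := by
      rintro c ⟨a, ha⟩
      have hex2 : ∃ b, (f b).1 ≠ c := by
        by_cases hc0 : c = (f 0).1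
        · exact ⟨b₀, hc0 ▸ hb₀⟩
        · exact ⟨0, fun h => hc0 h.symm⟩
      obtain ⟨b, hb⟩ := hex2
      obtain ⟨i, hi1, hi2⟩ := exit_exists hl3 f c ha hb
      have hnei : (f i).1 ≠ (f (i+1)).1 := fun h => hi2 (h.symm.trans hi1)
      have hci := adj_conn hk hN (hadj i) hnei
      have hdi : delta (sd (f i)) = δ := by rw [hside i]
      rcases hci.2 with ⟨hp1, hp2, hp3⟩ | ⟨hp1, hp2, hp3⟩
      · exact ⟨i+1, by rw [hp3, hi1, hdi]⟩
      · obtain ⟨j, hj1, hj2⟩ := entry_exists hl3 f c ha hb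
        have hnej : (f j).1 ≠ (f (j+1)).1 := fun h => hj1 (h.trans hj2)
        have hcj := adj_conn hk hN (hadj j) hnej
        have hdj : delta (sd (f j)) = δ := by rw [hside j]
        rcases hcj.2 with ⟨hq1, hq2, hq3⟩ | ⟨hq1, hq2, hq3⟩
        · exfalso
          have he1 : f i = f (j+1) :=
            gv_ext (hi1.trans hj2.symm) ((hside i).trans (hside (j+1)).symm)
              (by rw [hp1, hq2])
          have hij : i = j + 1 := hinj he1
          have hcopy : ((f (i+1)).1 : ℕ) = ((f j).1 : ℕ) := by
            rw [hdi] at hp3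
            rw [hdj] at hq3
            rw [hi1] at hp3
            rw [hj2] at hq3
            exact mod_add_inj (f (i+1)).1.isLt (f j).1.isLt (hp3.symm.trans hq3)
          have he2 : f (i+1) = f j :=
            gv_ext (Fin.ext hcopy) ((hside (i+1)).trans (hside j).symm)
              (by rw [hp2, hq1])
          exact idx_two hl3 hij (hinj he2).symm
        · refine ⟨j, ?_⟩
          rw [hdj] at hq3
          rw [hj2] at hq3
          exact hq3
    have iter : ∀ t : ℕ, ∃ a, ((f a).1 : ℕ) = (((f 0).1 : ℕ) + δ * t) % (2*n) := by
      intro t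
      induction t with
      | zero =>
          refine ⟨0, ?_⟩
          rw [Nat.mul_zero, Nat.add_zero, Nat.mod_eq_of_lt (f 0).1.isLt]
      | succ t ih =>
          obtain ⟨a, ha⟩ := ih
          obtain ⟨a', ha'⟩ := closure (f a).1 ⟨a, rfl⟩
          refine ⟨a', ?_⟩
          rw [ha', ha, Nat.mod_add_mod]
          congr 1
          ring
    set F : Fin n → ZMod ℓ := fun t => Classical.choose (iter t.val) with hF
    have hFspec : ∀ t : Fin n, ((f (F t)).1 : ℕ) = (((f 0).1 : ℕ) + δ * t.val) % (2*n) :=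
      fun t => Classical.choose_spec (iter t.val)
    have hFinj : Function.Injective F := by
      intro t₁ t₂ h
      have h1 := hFspec t₁
      have h2 := hFspec t₂
      rw [h] at h1
      have hb1 : δ * t₁.val < 2*n := by
        calc δ * t₁.val ≤ 2 * t₁.val := Nat.mul_le_mul_right _ hδ12.2
          _ < 2 * n := by have := t₁.isLt; omega
      have hb2 : δ * t₂.val < 2*n := by
        calc δ * t₂.val ≤ 2 * t₂.val := Nat.mul_le_mul_right _ hδ12.2
          _ < 2 * n := by have := t₂.isLt; omega
      have hmm := mod_inj (N := 2*n) hb1 hb2 (h1.symm.trans h2)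
      exact Fin.ext (Nat.eq_of_mul_eq_mul_left (by omega) hmm)
    have := Fintype.card_le_of_injective F hFinj
    rw [ZMod.card] at this
    simp only [Fintype.card_fin] at this
    omega

end P7

section P8
open GP
variable {n k ℓ : ℕ}

lemma GP.mod_cycle_false {N c a : ℕ} (hc : c < N) (ha : 1 ≤ a) (haN : a < N)
    (h : c = (c + a) % N) : False := by
  have h0 : (c + 0) % N = c := by rw [Nat.add_zero]; exact Nat.mod_eq_of_lt hc
  have := mod_inj (a := 0) (b := a) (c := c) (by omega) haN (h0.trans h)
  omega

lemma GP.delta_inj {s1 s2 : Bool} (h : delta s1 = delta s2) : s1 = s2 := by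
  cases s1 <;> cases s2 <;> simp_all [delta]

lemma GP.delta_bounds (s : Bool) : 1 ≤ delta s ∧ delta s ≤ 2 := by
  cases s <;> simp [delta]

lemma GP.two_copies_false (hk : 2 ≤ k) (hn : 4*k+2 ≤ n) (hl3 : 3 ≤ ℓ)
    (f : ZMod ℓ → GV n k) (hinj : Function.Injective f)
    (hadj : ∀ i, (Gnk n k).Adj (f i) (f (i+1)))
    {a₀ a₁ : ZMod ℓ} (hne : (f a₀).1 ≠ (f a₁).1)
    (hAll : ∀ j, (f j).1 = (f a₀).1 ∨ (f j).1 = (f a₁).1) : False := by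
  haveI : NeZero ℓ := ⟨by omega⟩
  have hN : 4 < 2*n := by omega
  set c₀ := (f a₀).1 with hc₀
  set c₁ := (f a₁).1 with hc₁
  obtain ⟨i, hi1, hi2⟩ := exit_exists hl3 f c₀ rfl (Ne.symm hne)
  obtain ⟨j, hj1, hj2⟩ := entry_exists hl3 f c₀ rfl (Ne.symm hne)
  have hti : (f (i+1)).1 = c₁ := (hAll (i+1)).resolve_left hi2
  have htj : (f j).1 = c₁ := (hAll j).resolve_left hj1
  have hconn_i := adj_conn hk hN (hadj i) (by rw [hi1, hti]; exact hne)
  have hconn_j := adj_conn hk hN (hadj j) (by rw [htj, hj2]; exact Ne.symm hne)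
  have hδi := delta_bounds (sd (f i))
  have hδj := delta_bounds (sd (f j))
  rcases hconn_i.2 with ⟨hp1, hp2, hp3⟩ | ⟨hp1, hp2, hp3⟩ <;>
    rcases hconn_j.2 with ⟨hq1, hq2, hq3⟩ | ⟨hq1, hq2, hq3⟩
  · -- exit fwd, entry fwd
    rw [hi1, hti] at hp3
    rw [htj, hj2] at hq3
    refine mod_cycle_false c₀.isLt (a := delta (sd (f i)) + delta (sd (f j)))
      (by omega) (by omega) ?_
    rw [← Nat.add_assoc, ← Nat.mod_add_mod, ← hp3, ← hq3]
  · -- exit fwd, entry bwd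
    rw [hi1, hti] at hp3
    rw [htj, hj2] at hq3
    have hδeq : delta (sd (f i)) = delta (sd (f j)) :=
      mod_inj (by omega) (by omega) (hp3.symm.trans hq3)
    have hseq : sd (f i) = sd (f j) := delta_inj hδeq
    have he1 : f i = f (j+1) := by
      refine gv_ext (hi1.trans hj2.symm) ?_ (by rw [hp1, hq2])
      rw [hseq]; exact hconn_j.1
    have hij : i = j + 1 := hinj he1
    have he2 : f (i+1) = f j := by
      refine gv_ext (hti.trans htj.symm) ?_ (by rw [hp2, hq1])
      rw [← hconn_i.1, hseq]
    exact idx_two hl3 hij (hinj he2).symm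
  · -- exit bwd, entry fwd
    rw [hi1, hti] at hp3
    rw [htj, hj2] at hq3
    have hδeq : delta (sd (f i)) = delta (sd (f j)) :=
      mod_inj (by omega) (by omega) (hp3.symm.trans hq3)
    have hseq : sd (f i) = sd (f j) := delta_inj hδeq
    have he1 : f i = f (j+1) := by
      refine gv_ext (hi1.trans hj2.symm) ?_ (by rw [hp1, hq2])
      rw [hseq]; exact hconn_j.1
    have hij : i = j + 1 := hinj he1
    have he2 : f (i+1) = f j := by
      refine gv_ext (hti.trans htj.symm) ?_ (by rw [hp2, hq1])
      rw [← hconn_i.1, hseq]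
    exact idx_two hl3 hij (hinj he2).symm
  · -- exit bwd, entry bwd
    rw [hi1, hti] at hp3
    rw [htj, hj2] at hq3
    refine mod_cycle_false c₀.isLt (a := delta (sd (f j)) + delta (sd (f i)))
      (by omega) (by omega) ?_
    rw [← Nat.add_assoc, ← Nat.mod_add_mod, ← hq3, ← hp3]

end P8

section P9
open GP
variable {n k ℓ : ℕ}

lemma GP.bridge_case (hk : 2 ≤ k) (hn : 4*k+2 ≤ n) (hl3 : 3 ≤ ℓ)
    (hlo : 2*k ≤ ℓ) (hhi : ℓ ≤ 4*k+1)
    (f : ZMod ℓ → GV n k) (hinj : Function.Injective f)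
    (hadj : ∀ i, (Gnk n k).Adj (f i) (f (i+1)))
    (i₀ : ZMod ℓ) (hch : sd (f i₀) ≠ sd (f (i₀+1))) : False := by
  classical
  haveI : NeZero ℓ := ⟨by omega⟩
  have hN : 4 < 2*n := by omega
  have hbr₀ : Bridge (f i₀) (f (i₀+1)) := change_bridge hk f hadj i₀ hch
  have hsec : ∃ j, j ≠ i₀ ∧ sd (f j) ≠ sd (f (j+1)) := by
    by_contra h
    push_neg at h
    exact second_change hl3 f h hch
  obtain ⟨j₀, hj₀ne, hj₀ch⟩ := hsec
  have hbr₁ : Bridge (f j₀) (f (j₀+1)) := change_bridge hk f hadj j₀ hj₀ch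
  have hc01 : (f i₀).1 ≠ (f j₀).1 :=
    bridges_distinct hk hl3 f hinj hbr₀ hbr₁ (Ne.symm hj₀ne)
  -- a third copy is visited
  have hthird : ∃ a₂, (f a₂).1 ≠ (f i₀).1 ∧ (f a₂).1 ≠ (f j₀).1 := by
    by_contra h
    push_neg at h
    refine two_copies_false hk hn hl3 f hinj hadj hc01 ?_
    intro j
    by_cases hj : (f j).1 = (f i₀).1
    · exact Or.inl hj
    · exact Or.inr (h j hj)
  obtain ⟨a₂, ha₂0, ha₂1⟩ := hthird
  -- a second vertex in the third copy
  have hb₂ : ∃ b₂, b₂ ≠ a₂ ∧ (f b₂).1 = (f a₂).1 := by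
    by_contra h
    push_neg at h
    have h1 : a₂ - 1 ≠ a₂ := by
      intro hcon
      have : (1 : ZMod ℓ) = 0 := by linear_combination - hcon
      exact one_ne_zero' hl3 this
    have h2 : a₂ + 1 ≠ a₂ := by
      intro hcon
      have : (1 : ZMod ℓ) = 0 := by linear_combination hcon
      exact one_ne_zero' hl3 this
    have hn1 : (f (a₂ - 1)).1 ≠ (f a₂).1 := h _ h1
    have hn2 : (f (a₂ + 1)).1 ≠ (f a₂).1 := h _ h2
    have adj1 : (Gnk n k).Adj (f a₂) (f (a₂ - 1)) := by
      have h3 := hadj (a₂ - 1)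
      have h4 : a₂ - 1 + 1 = a₂ := by ring
      rw [h4] at h3
      exact h3.symm
    have adj2 : (Gnk n k).Adj (f a₂) (f (a₂ + 1)) := hadj a₂
    have heq := conn_unique hk hN adj1 adj2 (Ne.symm hn1) (Ne.symm hn2)
    have hidx := hinj heq
    have : (2 : ZMod ℓ) = 0 := by linear_combination (-1 : ZMod ℓ) * hidx
    exact two_ne_zero' hl3 this
  obtain ⟨b₂, hb₂ne, hb₂eq⟩ := hb₂
  -- depth coverage in the two bridge copies
  have cover : ∀ (b : Bool) (s : Bool) (d : Fin k),
      ∃ j, (f j).1 = (cond b (f j₀).1 (f i₀).1) ∧ sd (f j) = s ∧ dp (f j) = d.val := by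
    intro b s d
    have hd : d.val ≤ k - 1 := by have := d.isLt; omega
    cases b
    · exact escape_side hk hn hl3 f hinj hadj i₀ hbr₀ s d.val hd
    · exact escape_side hk hn hl3 f hinj hadj j₀ hbr₁ s d.val hd
  -- build an injection from a (4k+2)-element type
  set Φ : (Bool × Bool × Fin k) ⊕ Bool → ZMod ℓ := fun x =>
    match x with
    | Sum.inl y => Classical.choose (cover y.1 y.2.1 y.2.2)
    | Sum.inr b => cond b a₂ b₂
    with hΦ
  have hΦinl : ∀ y : Bool × Bool × Fin k,
      (f (Φ (Sum.inl y))).1 = (cond y.1 (f j₀).1 (f i₀).1) ∧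
      sd (f (Φ (Sum.inl y))) = y.2.1 ∧ dp (f (Φ (Sum.inl y))) = y.2.2.val := by
    intro y
    exact Classical.choose_spec (cover y.1 y.2.1 y.2.2)
  have hΦinr : ∀ b : Bool, (f (Φ (Sum.inr b))).1 = (f a₂).1 := by
    intro b
    cases b
    · exact hb₂eq
    · rfl
  have hΦinj : Function.Injective Φ := by
    intro x y hxy
    match x, y with
    | Sum.inl y1, Sum.inl y2 =>
        have s1 := hΦinl y1
        have s2 := hΦinl y2
        rw [hxy] at s1
        have hcopy : cond y1.1 (f j₀).1 (f i₀).1 = cond y2.1 (f j₀).1 (f i₀).1 :=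
          s1.1.symm.trans s2.1
        have hb : y1.1 = y2.1 := by
          cases hb1 : y1.1 <;> cases hb2 : y2.1 <;> rw [hb1, hb2] at hcopy <;> simp_all
        have hs : y1.2.1 = y2.2.1 := s1.2.1.symm.trans s2.2.1
        have hdv : y1.2.2 = y2.2.2 := Fin.ext (s1.2.2.symm.trans s2.2.2)
        have : y1 = y2 := by
          rcases y1 with ⟨b1, s1', d1⟩
          rcases y2 with ⟨b2, s2', d2⟩
          simp_all
        rw [this]
    | Sum.inl y1, Sum.inr b =>
        exfalso
        have s1 := hΦinl y1
        have s2 := hΦinr b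
        rw [hxy] at s1
        rw [s2] at s1
        cases hb1 : y1.1 <;> rw [hb1] at s1
        · exact ha₂0 s1.1
        · exact ha₂1 s1.1
    | Sum.inr b, Sum.inl y1 =>
        exfalso
        have s1 := hΦinl y1
        have s2 := hΦinr b
        rw [← hxy] at s1
        rw [s2] at s1
        cases hb1 : y1.1 <;> rw [hb1] at s1
        · exact ha₂0 s1.1
        · exact ha₂1 s1.1
    | Sum.inr b1, Sum.inr b2 =>
        have e1 : Φ (Sum.inr b1) = cond b1 a₂ b₂ := rfl
        have e2 : Φ (Sum.inr b2) = cond b2 a₂ b₂ := rfl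
        rw [e1, e2] at hxy
        cases b1 <;> cases b2
        · rfl
        · exact absurd hxy hb₂ne
        · exact absurd hxy.symm hb₂ne
        · rfl
  have hcard := Fintype.card_le_of_injective Φ hΦinj
  rw [ZMod.card] at hcard
  simp only [Fintype.card_sum, Fintype.card_prod, Fintype.card_bool, Fintype.card_fin] at hcard
  omega

lemma GP.core (hk : 2 ≤ k) (hn : 4*k+2 ≤ n) (hl3 : 3 ≤ ℓ)
    (hlo : 2*k ≤ ℓ) (hhi : ℓ ≤ 4*k+1)
    (f : ZMod ℓ → GV n k) (hinj : Function.Injective f)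
    (hadj : ∀ i, (Gnk n k).Adj (f i) (f (i+1))) : False := by
  by_cases hch : ∃ i, sd (f i) ≠ sd (f (i+1))
  · obtain ⟨i₀, h⟩ := hch
    exact bridge_case hk hn hl3 hlo hhi f hinj hadj i₀ h
  · push_neg at hch
    exact no_bridge_case hk hn hl3 hlo hhi f hinj hadj hch

end P9

section P10
open GP

lemma GP.support_getElem_eq_getVert {V : Type*} {G : SimpleGraph V} {u v : V}
    (p : G.Walk u v) : ∀ (i : ℕ) (h : i < p.support.length), p.support[i] = p.getVert i := by
  induction p with
  | nil => intro i h; simp at h; subst h; rfl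
  | cons ha q ih =>
      intro i h
      cases i with
      | zero => rfl
      | succ i =>
          have h' : i < q.support.length := by
            simpa [SimpleGraph.Walk.support_cons] using h
          have h2 : (SimpleGraph.Walk.cons ha q).support[i+1] = q.support[i] := by
            simp [SimpleGraph.Walk.support_cons]
          rw [h2, ih i h']
          rfl

theorem stmt_11' (n k : ℕ) (hk : 2 ≤ k) (hn : 4*k + 2 ≤ n) :
    ∀ (v : GV n k) (c : (Gnk n k).Walk v v), c.IsCycle →
      ¬ (2*k ≤ c.length ∧ c.length ≤ 4*k + 1) := by
  intro v c hcyc hcon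
  obtain ⟨hlo, hhi⟩ := hcon
  have hl3 : 3 ≤ c.length := hcyc.three_le_length
  haveI : NeZero c.length := ⟨by omega⟩
  haveI : Fact (1 < c.length) := ⟨by omega⟩
  set f : ZMod c.length → GV n k := fun i => c.getVert (i.val + 1) with hf
  have hadj : ∀ i, (Gnk n k).Adj (f i) (f (i+1)) := by
    intro i
    have hival : i.val < c.length := i.val_lt
    have hval1 : (1 : ZMod c.length).val = 1 := ZMod.val_one c.length
    have hvaladd : (i + 1).val = (i.val + 1) % c.length := by
      rw [ZMod.val_add, hval1]
    by_cases hcase : i.val + 1 < c.length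
    · have h1 : (i+1).val = i.val + 1 := by rw [hvaladd, Nat.mod_eq_of_lt hcase]
      show (Gnk n k).Adj (c.getVert (i.val + 1)) (c.getVert ((i+1).val + 1))
      rw [h1]
      exact c.adj_getVert_succ hcase
    · have hieq : i.val + 1 = c.length := by omega
      have h1 : (i+1).val = 0 := by rw [hvaladd, hieq, Nat.mod_self]
      show (Gnk n k).Adj (c.getVert (i.val + 1)) (c.getVert ((i+1).val + 1))
      rw [h1, hieq]
      have h6 : c.getVert c.length = c.getVert 0 := by
        rw [c.getVert_length, c.getVert_zero]
      rw [h6]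
      exact c.adj_getVert_succ (by omega)
  have hinj : Function.Injective f := by
    intro a b hab
    have hta : a.val < c.support.tail.length := by
      rw [List.length_tail, c.length_support]
      have hv : a.val < c.length := a.val_lt
      omega
    have htb : b.val < c.support.tail.length := by
      rw [List.length_tail, c.length_support]
      have hv : b.val < c.length := b.val_lt
      omega
    have hga : c.support.tail.get ⟨a.val, hta⟩ = f a := by
      rw [List.get_tail, List.get_eq_getElem]
      exact support_getElem_eq_getVert c (a.val + 1) _
    have hgb : c.support.tail.get ⟨b.val, htb⟩ = f b := by
      rw [List.get_tail, List.get_eq_getElem]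
      exact support_getElem_eq_getVert c (b.val + 1) _
    have heq : c.support.tail.get ⟨a.val, hta⟩ = c.support.tail.get ⟨b.val, htb⟩ := by
      rw [hga, hgb, hab]
    have hfin := (List.Nodup.get_inj_iff hcyc.support_nodup).mp heq
    have hval : a.val = b.val := by
      simpa using congrArg Fin.val hfin
    exact ZMod.val_injective c.length hval
  exact (GP.core hk hn hl3 hlo hhi f hinj hadj).elim

end P10


/-- For all integers `k ≥ 2` and `n ≥ 4k+2`, the graph `G(n,k)` contains no cycle
whose length `ℓ` satisfies `2k ≤ ℓ ≤ 4k+1`. -/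
theorem stmt_11 (n k : ℕ) (hk : 2 ≤ k) (hn : 4*k + 2 ≤ n) :
    ∀ (v : GV n k) (c : (Gnk n k).Walk v v), c.IsCycle →
      ¬ (2*k ≤ c.length ∧ c.length ≤ 4*k + 1) := by
  exact stmt_11' n k hk hn
end

section
/- For all integers k ≥ 2 and n ≥ 4k+2, the graph G(n,k) contains a cycle of length greater than 4k+1; in particular, its circumference is greater than 4k+1. -/
/-- Build a walk along a function `g : ℕ → V` with consecutive values adjacent. -/
lemma walk_of_fn {V : Type*} {G : SimpleGraph V} (g : ℕ → V)
    (hadj : ∀ i, G.Adj (g i) (g (i+1))) :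
    ∀ m, ∃ w : G.Walk (g 0) (g m),
      w.length = m ∧ w.support = (List.range (m+1)).map g ∧
      w.edges = (List.range m).map (fun i => s(g i, g (i+1)))
  | 0 => ⟨SimpleGraph.Walk.nil, by simp [List.range_succ]⟩
  | (m+1) => by
    obtain ⟨w, hl, hs, he⟩ := walk_of_fn g hadj m
    refine ⟨w.concat (hadj m), ?_, ?_, ?_⟩
    · simp [hl]
    · simp [hs, List.range_succ, List.concat_eq_append]
    · simp [he, List.range_succ, List.concat_eq_append]

/-- From a periodic-looking function with adjacent consecutive values and injectivity on
`[0, N)`, build a cycle of length `N`. -/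
lemma cycle_of_fn {V : Type*} {G : SimpleGraph V} (f : ℕ → V) (N : ℕ) (hN : 3 ≤ N)
    (hadj : ∀ i, i < N → G.Adj (f i) (f (i+1))) (hfN : f N = f 0)
    (hinj : ∀ i, i < N → ∀ j, j < N → f i = f j → i = j) :
    ∃ (v : V) (c : G.Walk v v), c.IsCycle ∧ c.length = N := by
  have hNpos : 0 < N := by omega
  set g : ℕ → V := fun i => f (i % N) with hgdef
  have hg : ∀ i, g i = f (i % N) := fun _ => rfl
  have hmodlt : ∀ i, i % N < N := fun i => Nat.mod_lt _ hNpos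
  -- adjacency for g everywhere
  have hadj' : ∀ i, G.Adj (g i) (g (i+1)) := by
    intro i
    have h1 : i % N < N := hmodlt i
    have hplus : (i+1) % N = (i % N + 1) % N := by
      rw [Nat.add_mod, Nat.mod_eq_of_lt (show 1 < N by omega)]
    rcases Nat.lt_or_ge (i % N + 1) N with h | h
    · have : (i+1) % N = i % N + 1 := by rw [hplus, Nat.mod_eq_of_lt h]
      rw [hg, hg, this]
      exact hadj _ h1
    · have hNe : i % N + 1 = N := by omega
      have : (i+1) % N = 0 := by rw [hplus, hNe, Nat.mod_self]
      rw [hg, hg, this]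
      have := hadj (i % N) h1
      rw [hNe, hfN] at this
      exact this
  obtain ⟨w, hl, hs, he⟩ := walk_of_fn g hadj' N
  have hgN : g N = g 0 := by simp [hg, Nat.mod_self]
  refine ⟨g 0, w.copy rfl hgN, ?_, ?_⟩
  · -- injectivity of g-values on [0,N)
    have hginj : ∀ i, i < N → ∀ j, j < N → g i = g j → i = j := by
      intro i hi j hj hgij
      rw [hg, hg, Nat.mod_eq_of_lt hi, Nat.mod_eq_of_lt hj] at hgij
      exact hinj i hi j hj hgij
    -- g (i+1) values determine i on [0,N)
    have hsucc : ∀ i, i < N → ∀ j, j < N → g (i+1) = g (j+1) → i = j := by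
      intro i hi j hj hgij
      rw [hg, hg] at hgij
      have h1 := hinj _ (hmodlt (i+1)) _ (hmodlt (j+1)) hgij
      rcases Nat.lt_or_ge (i+1) N with h | h
      · rcases Nat.lt_or_ge (j+1) N with h' | h'
        · rw [Nat.mod_eq_of_lt h, Nat.mod_eq_of_lt h'] at h1; omega
        · have hJ : j + 1 = N := by omega
          rw [Nat.mod_eq_of_lt h, hJ, Nat.mod_self] at h1; omega
      · have hI : i + 1 = N := by omega
        rcases Nat.lt_or_ge (j+1) N with h' | h'
        · rw [hI, Nat.mod_self, Nat.mod_eq_of_lt h'] at h1; omega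
        · have hJ : j + 1 = N := by omega
          omega
    constructor
    constructor
    constructor
    · -- IsTrail : edges nodup
      rw [SimpleGraph.Walk.edges_copy, he]
      refine List.Nodup.map_on ?_ List.nodup_range
      intro i hi j hj hij
      rw [List.mem_range] at hi hj
      rw [Sym2.eq_iff] at hij
      rcases hij with ⟨h1, _⟩ | ⟨h1, h2⟩
      · exact hginj i hi j hj h1
      · -- g i = g (j+1), g (i+1) = g j
        rw [hg, hg, Nat.mod_eq_of_lt hi] at h1
        rw [hg, hg, Nat.mod_eq_of_lt hj] at h2
        have hij1 : (i+1) % N = j := hinj _ (hmodlt (i+1)) _ hj h2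
        have hji1 : i = (j+1) % N := hinj _ hi _ (hmodlt (j+1)) h1
        rcases Nat.lt_or_ge (i+1) N with h | h
        · have hi1 : (i+1) % N = i+1 := Nat.mod_eq_of_lt h
          rcases Nat.lt_or_ge (j+1) N with h' | h'
          · rw [Nat.mod_eq_of_lt h'] at hji1; omega
          · have hJ : j + 1 = N := by omega
            rw [hJ, Nat.mod_self] at hji1; omega
        · have hI : i + 1 = N := by omega
          rw [hI, Nat.mod_self] at hij1
          subst hij1
          have : (0+1) % N = 1 := Nat.mod_eq_of_lt (by omega)
          rw [this] at hji1; omega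
    · -- nonempty
      intro hnil
      have : (w.copy rfl hgN).length = N := by rw [SimpleGraph.Walk.length_copy, hl]
      rw [hnil] at this
      simp at this; omega
    · -- support tail nodup
      rw [SimpleGraph.Walk.support_copy, hs, List.range_succ_eq_map]
      simp only [List.map_cons, List.tail_cons, List.map_map]
      refine List.Nodup.map_on ?_ List.nodup_range
      intro i hi j hj hij
      rw [List.mem_range] at hi hj
      exact hsucc i hi j hj hij
  · rw [SimpleGraph.Walk.length_copy, hl]

/-- For all integers `k ≥ 2` and `n ≥ 4k+2`, the graph `G(n,k)` contains a cycle of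
length greater than `4k+1`; in particular, its circumference is greater than `4k+1`. -/
theorem stmt_12 (n k : ℕ) (hk : 2 ≤ k) (hn : 4*k + 2 ≤ n) :
    ∃ (v : GV n k) (c : (Gnk n k).Walk v v), c.IsCycle ∧ 4*k + 1 < c.length := by
  have hnpos : 0 < 2 * n := by omega
  -- the cycle visits copies 0, 2, 4, …, 2n-2; in copy c it uses the edge x₀ — x_{2(k-1)}
  set f : ℕ → GV n k := fun t =>
    (⟨2*(t/2) % (2*n), Nat.mod_lt _ hnpos⟩,
      if t % 2 = 0 then Sum.inl ⟨0, by omega⟩ else Sum.inl ⟨2*(k-1), by omega⟩) with hf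
  have hx0ne : (⟨0, by omega⟩ : Fin (2*(k-1)+1)) ≠ ⟨2*(k-1), by omega⟩ := by
    intro h
    have := congrArg Fin.val h
    simp at this
    omega
  have hadj : ∀ i, i < 2*n → (Gnk n k).Adj (f i) (f (i+1)) := by
    intro i hi
    have h2 : 2*(i/2) < 2*n := by omega
    rcases Nat.even_or_odd i with ⟨m, hm⟩ | ⟨m, hm⟩
    · -- i even: inside copy, edge x₀ — x_{2(k-1)}
      have hieven : i % 2 = 0 := by omega
      have hisucc : (i+1) % 2 = 1 := by omega
      have hdiv : (i+1)/2 = i/2 := by omega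
      rw [Gnk, SimpleGraph.fromRel_adj]
      constructor
      · intro h
        have h3 := congrArg Prod.snd h
        simp only [hf] at h3
        rw [if_pos hieven, if_neg (by omega)] at h3
        have h4 := Sum.inl.inj h3
        rw [Fin.mk.injEq] at h4
        omega
      · right
        left
        constructor
        · simp [hf, hdiv]
        · simp only [hf]
          rw [if_neg (show ¬((i+1) % 2 = 0) by omega), if_pos hieven]
          left
          show (0:ℕ) = (2*(k-1) + 1) % (2*(k-1)+1)
          rw [Nat.mod_self]
    · -- i odd: connecting edge x_{2(k-1)} (copy c) — x₀ (copy c+2)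
      have hiodd : i % 2 = 1 := by omega
      have hisucc : (i+1) % 2 = 0 := by omega
      have hdiv : 2*((i+1)/2) = 2*(i/2) + 2 := by omega
      rw [Gnk, SimpleGraph.fromRel_adj]
      constructor
      · intro h
        have h3 := congrArg Prod.snd h
        simp only [hf] at h3
        rw [if_neg (show ¬(i % 2 = 0) by omega), if_pos hisucc] at h3
        have h4 := Sum.inl.inj h3
        rw [Fin.mk.injEq] at h4
        omega
      · left
        right
        left
        refine ⟨?_, ?_, ?_⟩
        · simp only [hf]
          rw [hdiv, Nat.mod_eq_of_lt h2]
        · simp [hf, hiodd]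
        · simp [hf, hisucc]
  have hfN : f (2*n) = f 0 := by
    have h1 : 2*((2*n)/2) = 2*n := by omega
    have h2 : (2*n) % 2 = 0 := by omega
    simp only [hf, h1, h2, Nat.mod_self]
    rfl
  have hinj : ∀ i, i < 2*n → ∀ j, j < 2*n → f i = f j → i = j := by
    intro i hi j hj hij
    have h1 := congrArg (fun p => (p.1 : ℕ)) hij
    have h2 := congrArg Prod.snd hij
    simp only [hf] at h1 h2
    have hi2 : 2*(i/2) < 2*n := by omega
    have hj2 : 2*(j/2) < 2*n := by omega
    rw [Nat.mod_eq_of_lt hi2, Nat.mod_eq_of_lt hj2] at h1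
    -- parity must agree
    have hpar : i % 2 = j % 2 := by
      by_contra hne
      rcases Nat.mod_two_eq_zero_or_one i with hI | hI <;>
        rcases Nat.mod_two_eq_zero_or_one j with hJ | hJ
      · exact hne (hI.trans hJ.symm)
      · rw [if_pos hI, if_neg (show ¬(j % 2 = 0) by omega)] at h2
        have h4 := Sum.inl.inj h2
        rw [Fin.mk.injEq] at h4
        omega
      · rw [if_neg (show ¬(i % 2 = 0) by omega), if_pos hJ] at h2
        have h4 := Sum.inl.inj h2
        rw [Fin.mk.injEq] at h4
        omega
      · exact hne (hI.trans hJ.symm)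
    omega
  obtain ⟨v, c, hc, hlen⟩ := cycle_of_fn f (2*n) (by omega) hadj hfN hinj
  exact ⟨v, c, hc, by omega⟩
end
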